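/- For every integer n ≥ 1, every good placement of queens on the n × n board B_n has size at least n − 1. -/

import Mathlib

/-- The n × n board: squares {1,…,n} × {1,…,n} ⊆ ℤ². -/
noncomputable def board (n : ℕ) : Finset (ℤ × ℤ) :=
  Finset.Icc (1 : ℤ) n ×ˢ Finset.Icc (1 : ℤ) n

/-- Two squares share a column, row, diagonal, or antidiagonal. -/
def SameLine (a b : ℤ × ℤ) : Prop :=
  a.1 = b.1 ∨ a.2 = b.2 ∨ a.1 - a.2 = b.1 - b.2 ∨ a.1 + a.2 = b.1 + b.2

/-- A set of squares contains three (pairwise distinct) squares in a line. -/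
def ThreeInLine (S : Finset (ℤ × ℤ)) : Prop :=
  ∃ a ∈ S, ∃ b ∈ S, ∃ c ∈ S, a ≠ b ∧ a ≠ c ∧ b ≠ c ∧
    ((a.1 = b.1 ∧ b.1 = c.1) ∨ (a.2 = b.2 ∧ b.2 = c.2) ∨
     (a.1 - a.2 = b.1 - b.2 ∧ b.1 - b.2 = c.1 - c.2) ∨
     (a.1 + a.2 = b.1 + b.2 ∧ b.1 + b.2 = c.1 + c.2))

/-- A good placement on B_n: a subset of the board with no three in a line,
    such that adding any unoccupied square of the board creates three in a line. -/
def IsGoodPlacement (n : ℕ) (Q : Finset (ℤ × ℤ)) : Prop :=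
  Q ⊆ board n ∧ ¬ ThreeInLine Q ∧
    ∀ s ∈ board n, s ∉ Q → ThreeInLine (insert s Q)

/-!
Every line of a good placement `Q` holds at most two queens, and every empty square lies on a
full line, one holding exactly two. If at most one column (or row) of the board is not full,
then `2 (n - 1) ≤ #Q` already. Otherwise let `a < b` be the outermost non-full columns and
`c < d` the outermost non-full rows, so every column and row outside `[a, b] × [c, d]` is full.
The border of this rectangle has `2 (b - a) + 2 (d - c)` cells. An occupied border cell lies on
one of the four sides, which hold at most one queen each; an empty one lies on a full line other
than a side, and such a line meets the border in at most two cells. Counting `Q` once by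
columns, once by rows and once along each family of diagonals, and charging the full lines and
the sides against these four counts, gives `4 (n - 1) ≤ 4 #Q`.
-/

open Finset

section LineCount

variable {α β : Type*} [DecidableEq β]

def lineCount (Q : Finset α) (g : α → β) (v : β) : ℕ := #{p ∈ Q | g p = v}

def fullLines (Q : Finset α) (g : α → β) : Finset β := {v ∈ Q.image g | lineCount Q g v = 2}

lemma mem_fullLines {Q : Finset α} {g : α → β} {v : β} :
    v ∈ fullLines Q g ↔ lineCount Q g v = 2 := by
  refine ⟨fun h => (mem_filter.1 h).2, fun h => mem_filter.2 ⟨?_, h⟩⟩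
  obtain ⟨p, hp⟩ : {p ∈ Q | g p = v}.Nonempty :=
    card_pos.1 (by rw [← lineCount, h]; norm_num)
  exact mem_image.2 ⟨p, (mem_filter.1 hp).1, (mem_filter.1 hp).2⟩

lemma sum_lineCount (Q : Finset α) (g : α → β) (S : Finset β) :
    ∑ v ∈ S, lineCount Q g v = #{p ∈ Q | g p ∈ S} :=
  sum_card_fiberwise_eq_card_filter Q S g

lemma lineCount_insert [DecidableEq α] {Q : Finset α} {s : α} (hs : s ∉ Q) (g : α → β)
    (v : β) : lineCount (insert s Q) g v = lineCount Q g v + if g s = v then 1 else 0 := by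
  unfold lineCount
  rw [filter_insert]
  split_ifs
  · rw [card_insert_of_notMem (fun h' => hs (mem_filter.1 h').1)]
  · rfl

lemma two_mul_card_fullLines_add_sum_le (Q : Finset α) (g : α → β) {T : Finset β}
    (hT : Disjoint (fullLines Q g) T) :
    2 * #(fullLines Q g) + ∑ v ∈ T, lineCount Q g v ≤ #Q := by
  calc 2 * #(fullLines Q g) + ∑ v ∈ T, lineCount Q g v
      = ∑ v ∈ fullLines Q g ∪ T, lineCount Q g v := by
        rw [sum_union hT, sum_const_nat fun v hv => mem_fullLines.1 hv, mul_comm]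
    _ ≤ #Q := (sum_lineCount Q g _).trans_le (card_filter_le _ _)

lemma card_filter_mem_le_two_mul {B : Finset α} {g : α → β} {F : Finset β}
    (h : ∀ v ∈ F, lineCount B g v ≤ 2) : #{p ∈ B | g p ∈ F} ≤ 2 * #F := by
  rw [← sum_lineCount, mul_comm]
  exact sum_le_card_nsmul F _ 2 h

lemma card_le_two_of_forall_eq_or_eq [DecidableEq α] {s : Finset α} {x y : α}
    (h : ∀ p ∈ s, p = x ∨ p = y) : #s ≤ 2 :=
  (card_le_card fun p hp => by simpa using h p hp).trans card_le_two

end LineCount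

inductive Direction
  | column | row | diagonal | antidiagonal

namespace Direction

-- The lines in direction `dir` are the level sets of `dir.coord`.
def coord : Direction → ℤ × ℤ → ℤ
  | column, p => p.1
  | row, p => p.2
  | diagonal, p => p.1 - p.2
  | antidiagonal, p => p.1 + p.2

end Direction

open Direction

theorem threeInLine_iff {S : Finset (ℤ × ℤ)} :
    ThreeInLine S ↔ ∃ (dir : Direction) (v : ℤ), 2 < lineCount S dir.coord v := by
  constructor
  · rintro ⟨x, hx, y, hy, z, hz, hxy, hxz, hyz, hline⟩
    have of_collinear (dir : Direction) (h₁ : dir.coord x = dir.coord y)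
        (h₂ : dir.coord y = dir.coord z) : 2 < lineCount S dir.coord (dir.coord x) :=
      two_lt_card.2 ⟨x, by simp [hx], y, by simp [hy, h₁], z, by simp [hz, h₁, h₂], hxy, hxz, hyz⟩
    rcases hline with h | h | h | h
    exacts [⟨_, _, of_collinear column h.1 h.2⟩, ⟨_, _, of_collinear row h.1 h.2⟩,
      ⟨_, _, of_collinear diagonal h.1 h.2⟩, ⟨_, _, of_collinear antidiagonal h.1 h.2⟩]
  · rintro ⟨dir, v, h⟩
    obtain ⟨x, hx, y, hy, z, hz, hxy, hxz, hyz⟩ := two_lt_card.1 h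
    simp only [mem_filter] at hx hy hz
    refine ⟨x, hx.1, y, hy.1, z, hz.1, hxy, hxz, hyz, ?_⟩
    cases dir <;> simp only [coord] at hx hy hz <;> omega

namespace IsGoodPlacement

variable {n : ℕ} {Q : Finset (ℤ × ℤ)}

lemma lineCount_le_two (hQ : IsGoodPlacement n Q) (dir : Direction) (v : ℤ) :
    lineCount Q dir.coord v ≤ 2 := by
  by_contra h
  exact hQ.2.1 (threeInLine_iff.2 ⟨dir, v, by omega⟩)

lemma exists_lineCount_eq_two (hQ : IsGoodPlacement n Q) {s : ℤ × ℤ} (hs : s ∈ board n)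
    (hsQ : s ∉ Q) : ∃ dir : Direction, lineCount Q dir.coord (dir.coord s) = 2 := by
  obtain ⟨dir, v, h⟩ := threeInLine_iff.1 (hQ.2.2 s hs hsQ)
  have := hQ.lineCount_le_two dir v
  rw [lineCount_insert hsQ] at h
  split_ifs at h with hv
  · exact ⟨dir, by rw [hv]; omega⟩
  · omega

end IsGoodPlacement

section RectBorder

variable {a b c d : ℤ}

noncomputable def rectBorder (a b c d : ℤ) : Finset (ℤ × ℤ) :=
  Icc a b ×ˢ Icc c d \ Ioo a b ×ˢ Ioo c d

lemma mem_rectBorder {p : ℤ × ℤ} :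
    p ∈ rectBorder a b c d ↔
      (a ≤ p.1 ∧ p.1 ≤ b ∧ c ≤ p.2 ∧ p.2 ≤ d) ∧ (p.1 = a ∨ p.1 = b ∨ p.2 = c ∨ p.2 = d) := by
  simp only [rectBorder, mem_sdiff, mem_product, mem_Icc, mem_Ioo]
  omega

lemma card_rectBorder (hab : a < b) (hcd : c < d) :
    (#(rectBorder a b c d) : ℤ) = 2 * (b - a) + 2 * (d - c) := by
  rw [rectBorder, card_sdiff_of_subset (product_subset_product Ioo_subset_Icc_self
    Ioo_subset_Icc_self), card_product, card_product, Int.card_Icc, Int.card_Icc,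
    Int.card_Ioo, Int.card_Ioo, Nat.cast_sub]
  · push_cast
    rw [Int.toNat_of_nonneg (by omega), Int.toNat_of_nonneg (by omega),
      Int.toNat_of_nonneg (by omega), Int.toNat_of_nonneg (by omega)]
    ring
  · gcongr <;> omega

lemma rectBorder_subset_board {n : ℕ} (ha : 1 ≤ a) (hb : b ≤ n) (hc : 1 ≤ c) (hd : d ≤ n) :
    rectBorder a b c d ⊆ board n := by
  intro p hp
  simp only [board, mem_product, mem_Icc]
  have := mem_rectBorder.1 hp
  omega

lemma lineCount_rectBorder_column_le_two {v : ℤ} (hav : a < v) (hvb : v < b) :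
    lineCount (rectBorder a b c d) column.coord v ≤ 2 := by
  refine card_le_two_of_forall_eq_or_eq (x := (v, c)) (y := (v, d)) fun p hp => ?_
  obtain ⟨hpB, hpv⟩ := mem_filter.1 hp
  have := mem_rectBorder.1 hpB
  simp only [coord] at hpv
  simp only [Prod.ext_iff]
  omega

lemma lineCount_rectBorder_row_le_two {v : ℤ} (hcv : c < v) (hvd : v < d) :
    lineCount (rectBorder a b c d) row.coord v ≤ 2 := by
  refine card_le_two_of_forall_eq_or_eq (x := (a, v)) (y := (b, v)) fun p hp => ?_
  obtain ⟨hpB, hpv⟩ := mem_filter.1 hp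
  have := mem_rectBorder.1 hpB
  simp only [coord] at hpv
  simp only [Prod.ext_iff]
  omega

lemma lineCount_rectBorder_diagonal_le_two (v : ℤ) :
    lineCount (rectBorder a b c d) diagonal.coord v ≤ 2 := by
  -- The diagonal enters and leaves the rectangle at these two cells and runs through the
  -- interior in between.
  refine card_le_two_of_forall_eq_or_eq (x := (max a (c + v), max a (c + v) - v))
    (y := (min b (d + v), min b (d + v) - v)) fun p hp => ?_
  obtain ⟨hpB, hpv⟩ := mem_filter.1 hp
  have := mem_rectBorder.1 hpB
  simp only [coord] at hpv
  simp only [Prod.ext_iff]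
  omega

lemma lineCount_rectBorder_antidiagonal_le_two (v : ℤ) :
    lineCount (rectBorder a b c d) antidiagonal.coord v ≤ 2 := by
  refine card_le_two_of_forall_eq_or_eq (x := (max a (v - d), v - max a (v - d)))
    (y := (min b (v - c), v - min b (v - c))) fun p hp => ?_
  obtain ⟨hpB, hpv⟩ := mem_filter.1 hp
  have := mem_rectBorder.1 hpB
  simp only [coord] at hpv
  simp only [Prod.ext_iff]
  omega

lemma card_rectBorder_inter_le (Q : Finset (ℤ × ℤ)) :
    #(rectBorder a b c d ∩ Q) ≤ lineCount Q column.coord a + lineCount Q column.coord b +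
      lineCount Q row.coord c + lineCount Q row.coord d := by
  have hcover : rectBorder a b c d ∩ Q ⊆ {p ∈ Q | column.coord p = a} ∪
      {p ∈ Q | column.coord p = b} ∪ {p ∈ Q | row.coord p = c} ∪ {p ∈ Q | row.coord p = d} := by
    intro p hp
    obtain ⟨hpB, hpQ⟩ := mem_inter.1 hp
    have := (mem_rectBorder.1 hpB).2
    simp only [mem_union, mem_filter, hpQ, true_and]
    simp only [coord]
    tauto
  refine (card_le_card hcover).trans ?_
  unfold lineCount
  grw [card_union_le, card_union_le, card_union_le]

end RectBorder

section SparseEnds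

variable {α : Type*} {Q : Finset α} {g : α → ℤ} {n : ℕ}

lemma two_mul_sub_one_le_card (hle : ∀ v, lineCount Q g v ≤ 2)
    (h : #{v ∈ Icc (1 : ℤ) n | lineCount Q g v ≤ 1} ≤ 1) : 2 * (n - 1) ≤ #Q := by
  have hfull : {v ∈ Icc (1 : ℤ) n | ¬lineCount Q g v ≤ 1} ⊆ fullLines Q g := fun v hv =>
    mem_fullLines.2 (by have := hle v; have := (mem_filter.1 hv).2; omega)
  have hsplit := card_filter_add_card_filter_not (s := Icc (1 : ℤ) n) (lineCount Q g · ≤ 1)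
  have hbudget := two_mul_card_fullLines_add_sum_le Q g (disjoint_empty_right _)
  rw [Int.card_Icc] at hsplit
  rw [sum_empty] at hbudget
  have := card_le_card hfull
  omega

lemma exists_sparse_ends (hle : ∀ v, lineCount Q g v ≤ 2)
    (h : 1 < #{v ∈ Icc (1 : ℤ) n | lineCount Q g v ≤ 1}) :
    ∃ a b : ℤ, 1 ≤ a ∧ a < b ∧ b ≤ n ∧ lineCount Q g a ≤ 1 ∧ lineCount Q g b ≤ 1 ∧
      ∀ v ∈ Icc (1 : ℤ) n, (v < a ∨ b < v) → lineCount Q g v = 2 := by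
  set S := {v ∈ Icc (1 : ℤ) n | lineCount Q g v ≤ 1}
  have hS : S.Nonempty := card_pos.1 (by omega)
  obtain ⟨hmin, hmin_sparse⟩ := mem_filter.1 (S.min'_mem hS)
  obtain ⟨hmax, hmax_sparse⟩ := mem_filter.1 (S.max'_mem hS)
  refine ⟨S.min' hS, S.max' hS, (mem_Icc.1 hmin).1, S.min'_lt_max'_of_card h,
    (mem_Icc.1 hmax).2, hmin_sparse, hmax_sparse, fun v hv hout => ?_⟩
  have hvS : v ∉ S := fun hvS => by
    have := S.min'_le v hvS
    have := S.le_max' v hvS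
    omega
  have := hle v
  simp only [S, mem_filter, hv, true_and, not_le] at hvS
  omega

lemma le_card_of_sparse_ends {a b : ℤ} (h1a : 1 ≤ a) (hab : a < b) (hbn : b ≤ n)
    (ha : lineCount Q g a ≤ 1) (hb : lineCount Q g b ≤ 1)
    (hout : ∀ v ∈ Icc (1 : ℤ) n, (v < a ∨ b < v) → lineCount Q g v = 2) :
    2 * ((n : ℤ) - (b - a + 1)) + 2 * #{v ∈ fullLines Q g | a < v ∧ v < b} +
      lineCount Q g a + lineCount Q g b ≤ #Q := by
  have hends : Disjoint (fullLines Q g) {a, b} := by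
    simp only [disjoint_insert_right, disjoint_singleton_right, mem_fullLines]
    omega
  have hbudget := two_mul_card_fullLines_add_sum_le Q g hends
  rw [sum_pair hab.ne] at hbudget
  have hsplit : Disjoint (Icc (1 : ℤ) n \ Icc a b) {v ∈ fullLines Q g | a < v ∧ v < b} := by
    refine disjoint_left.2 fun v hv hv' => ?_
    simp only [mem_sdiff, mem_Icc, mem_filter] at hv hv'
    omega
  have hsub : (Icc (1 : ℤ) n \ Icc a b) ∪ {v ∈ fullLines Q g | a < v ∧ v < b} ⊆
      fullLines Q g := by
    refine union_subset (fun v hv => ?_) (filter_subset _ _)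
    simp only [mem_sdiff, mem_Icc] at hv
    exact mem_fullLines.2 (hout v (mem_Icc.2 hv.1) (by omega))
  have hcard := card_le_card hsub
  rw [card_union_of_disjoint hsplit, card_sdiff_of_subset (Icc_subset_Icc h1a hbn),
    Int.card_Icc, Int.card_Icc] at hcard
  omega

end SparseEnds

namespace IsGoodPlacement

variable {n : ℕ} {Q : Finset (ℤ × ℤ)} {a b c d : ℤ}

lemma card_rectBorder_sdiff_le (hQ : IsGoodPlacement n Q) (hB : rectBorder a b c d ⊆ board n)
    (ha : lineCount Q column.coord a ≤ 1) (hb : lineCount Q column.coord b ≤ 1)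
    (hc : lineCount Q row.coord c ≤ 1) (hd : lineCount Q row.coord d ≤ 1) :
    #(rectBorder a b c d \ Q) ≤
      2 * #{v ∈ fullLines Q column.coord | a < v ∧ v < b} +
      2 * #{v ∈ fullLines Q row.coord | c < v ∧ v < d} +
      2 * #(fullLines Q diagonal.coord) + 2 * #(fullLines Q antidiagonal.coord) := by
  set B := rectBorder a b c d
  have hcover : B \ Q ⊆
      {p ∈ B | column.coord p ∈ {v ∈ fullLines Q column.coord | a < v ∧ v < b}} ∪
      {p ∈ B | row.coord p ∈ {v ∈ fullLines Q row.coord | c < v ∧ v < d}} ∪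
      {p ∈ B | diagonal.coord p ∈ fullLines Q diagonal.coord} ∪
      {p ∈ B | antidiagonal.coord p ∈ fullLines Q antidiagonal.coord} := by
    intro p hp
    obtain ⟨hpB, hpQ⟩ := mem_sdiff.1 hp
    have hrect := (mem_rectBorder.1 hpB).1
    obtain ⟨dir, hfull⟩ := hQ.exists_lineCount_eq_two (hB hpB) hpQ
    have hmem := mem_fullLines.2 hfull
    simp only [mem_union, mem_filter, hpB, true_and]
    cases dir
    -- the sides hold at most one queen, so a full column or row through `p` is not a side
    · have : p.1 ≠ a := fun h => by simp only [coord, h] at hfull; omega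
      have : p.1 ≠ b := fun h => by simp only [coord, h] at hfull; omega
      exact Or.inl (Or.inl (Or.inl ⟨hmem, by simp only [coord]; omega⟩))
    · have : p.2 ≠ c := fun h => by simp only [coord, h] at hfull; omega
      have : p.2 ≠ d := fun h => by simp only [coord, h] at hfull; omega
      exact Or.inl (Or.inl (Or.inr ⟨hmem, by simp only [coord]; omega⟩))
    · exact Or.inl (Or.inr hmem)
    · exact Or.inr hmem
  have hcol := card_filter_mem_le_two_mul (B := B) (g := column.coord)
    (F := {v ∈ fullLines Q column.coord | a < v ∧ v < b})
    fun v hv => lineCount_rectBorder_column_le_two (mem_filter.1 hv).2.1 (mem_filter.1 hv).2.2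
  have hrow := card_filter_mem_le_two_mul (B := B) (g := row.coord)
    (F := {v ∈ fullLines Q row.coord | c < v ∧ v < d})
    fun v hv => lineCount_rectBorder_row_le_two (mem_filter.1 hv).2.1 (mem_filter.1 hv).2.2
  have hdiag := card_filter_mem_le_two_mul (B := B) (F := fullLines Q diagonal.coord)
    fun v _ => lineCount_rectBorder_diagonal_le_two v
  have hanti := card_filter_mem_le_two_mul (B := B) (F := fullLines Q antidiagonal.coord)
    fun v _ => lineCount_rectBorder_antidiagonal_le_two v
  grw [card_le_card hcover, card_union_le, card_union_le, card_union_le, hcol, hrow, hdiag, hanti]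

lemma sub_one_le_card_of_sparse_ends (hQ : IsGoodPlacement n Q)
    (h1a : 1 ≤ a) (hab : a < b) (hbn : b ≤ n) (h1c : 1 ≤ c) (hcd : c < d) (hdn : d ≤ n)
    (ha : lineCount Q column.coord a ≤ 1) (hb : lineCount Q column.coord b ≤ 1)
    (hc : lineCount Q row.coord c ≤ 1) (hd : lineCount Q row.coord d ≤ 1)
    (hcols : ∀ v ∈ Icc (1 : ℤ) n, (v < a ∨ b < v) → lineCount Q column.coord v = 2)
    (hrows : ∀ v ∈ Icc (1 : ℤ) n, (v < c ∨ d < v) → lineCount Q row.coord v = 2) :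
    n - 1 ≤ #Q := by
  have hborder := card_rectBorder hab hcd
  have hsplit := card_inter_add_card_sdiff (rectBorder a b c d) Q
  have hoccupied := card_rectBorder_inter_le (a := a) (b := b) (c := c) (d := d) Q
  have hfree := hQ.card_rectBorder_sdiff_le (rectBorder_subset_board h1a hbn h1c hdn) ha hb hc hd
  have hcol := le_card_of_sparse_ends h1a hab hbn ha hb hcols
  have hrow := le_card_of_sparse_ends h1c hcd hdn hc hd hrows
  have hdiag := two_mul_card_fullLines_add_sum_le Q diagonal.coord (disjoint_empty_right _)
  have hanti := two_mul_card_fullLines_add_sum_le Q antidiagonal.coord (disjoint_empty_right _)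
  rw [sum_empty] at hdiag hanti
  omega

end IsGoodPlacement

theorem stmt_5_general (n : ℕ)
    (Q : Finset (ℤ × ℤ)) (hQ : IsGoodPlacement n Q) : n - 1 ≤ Q.card := by
  rcases le_or_gt #{v ∈ Icc (1 : ℤ) n | lineCount Q column.coord v ≤ 1} 1 with hcol | hcol
  · have := two_mul_sub_one_le_card (hQ.lineCount_le_two column) hcol
    omega
  rcases le_or_gt #{v ∈ Icc (1 : ℤ) n | lineCount Q row.coord v ≤ 1} 1 with hrow | hrow
  · have := two_mul_sub_one_le_card (hQ.lineCount_le_two row) hrow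
    omega
  obtain ⟨a, b, h1a, hab, hbn, ha, hb, hcols⟩ :=
    exists_sparse_ends (hQ.lineCount_le_two column) hcol
  obtain ⟨c, d, h1c, hcd, hdn, hc, hd, hrows⟩ := exists_sparse_ends (hQ.lineCount_le_two row) hrow
  exact hQ.sub_one_le_card_of_sparse_ends h1a hab hbn h1c hcd hdn ha hb hc hd hcols hrows

theorem stmt_5 (n : ℕ) (hn : 1 ≤ n)
    (Q : Finset (ℤ × ℤ)) (hQ : IsGoodPlacement n Q) : n - 1 ≤ Q.card :=
  stmt_5_general n Q hQ
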